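/- arXiv:2002.00927 — 3 statements merged into one kernel-verified Lean document; each statement's English description precedes it below -/
import Mathlib

section
/- For every real number x and every integer K ≥ 1, if M ≥ K², then M − 1 − M·cos(x) + cos(K·x) ≥ 0. -/
open Real

lemma abs_sin_nat_mul_le (n : ℕ) (x : ℝ) : |Real.sin (n * x)| ≤ n * |Real.sin x| := by
  induction n with
  | zero => simp
  | succ n ih =>
    have h : Real.sin ((n + 1 : ℕ) * x) = Real.sin (n * x) * Real.cos x + Real.cos (n * x) * Real.sin x := by
      push_cast
      rw [add_mul, one_mul, Real.sin_add]
    rw [h]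
    calc |Real.sin (n * x) * Real.cos x + Real.cos (n * x) * Real.sin x|
        ≤ |Real.sin (n * x) * Real.cos x| + |Real.cos (n * x) * Real.sin x| := abs_add_le _ _
      _ ≤ |Real.sin (n * x)| * 1 + 1 * |Real.sin x| := by
          rw [abs_mul, abs_mul]
          gcongr
          · exact Real.abs_cos_le_one x
          · exact Real.abs_cos_le_one _
      _ ≤ n * |Real.sin x| * 1 + 1 * |Real.sin x| := by gcongr
      _ = (n + 1 : ℕ) * |Real.sin x| := by push_cast; ring

lemma one_sub_cos_nat_mul_le (n : ℕ) (x : ℝ) :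
    1 - Real.cos (n * x) ≤ (n : ℝ) ^ 2 * (1 - Real.cos x) := by
  have half : ∀ y : ℝ, 1 - Real.cos y = 2 * Real.sin (y / 2) ^ 2 := by
    intro y
    have h := Real.cos_two_mul (y / 2)
    have h' : (2 : ℝ) * (y / 2) = y := by ring
    rw [h'] at h
    have hp := Real.sin_sq_add_cos_sq (y / 2)
    linarith
  have h1 := half (n * x)
  have h2 := half x
  rw [h1, h2]
  have key : |Real.sin (n * (x / 2))| ≤ n * |Real.sin (x / 2)| := abs_sin_nat_mul_le n (x / 2)
  have hsq : Real.sin (n * x / 2) ^ 2 ≤ ((n : ℝ) * |Real.sin (x / 2)|) ^ 2 := by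
    rw [← sq_abs]
    apply pow_le_pow_left₀ (abs_nonneg _)
    rw [show (n : ℝ) * x / 2 = n * (x / 2) by ring]
    exact key
  have : ((n : ℝ) * |Real.sin (x / 2)|) ^ 2 = (n : ℝ) ^ 2 * Real.sin (x / 2) ^ 2 := by
    rw [mul_pow, sq_abs]
  nlinarith [hsq]

theorem trig_ineq (x : ℝ) (K : ℕ) (hK : 1 ≤ K) (M : ℝ) (hM : (K : ℝ) ^ 2 ≤ M) :
    M - 1 - M * Real.cos x + Real.cos (K * x) ≥ 0 := by
  have h := one_sub_cos_nat_mul_le K x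
  have hc : Real.cos x ≤ 1 := Real.cos_le_one x
  nlinarith [h, hc]
end

section
/- For every real M ≥ 1 and every positive integer K with K² ≤ M, and every x with |x| ≤ √6/√M, one has cos(K·x) ≤ cos(x), with equality only if x = 0 (when K ≥ 2). -/
theorem cos_mul_le_cos (K : ℕ) (hK : 2 ≤ K) (M : ℝ) (hM : 1 ≤ M)
    (hKM : (K : ℝ) ^ 2 ≤ M) (x : ℝ) (hx : |x| ≤ Real.sqrt 6 / Real.sqrt M) :
    Real.cos (K * x) ≤ Real.cos x ∧ (Real.cos (K * x) = Real.cos x → x = 0) := by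
  have hM0 : (0:ℝ) < M := lt_of_lt_of_le one_pos hM
  have hsqM0 : 0 < Real.sqrt M := Real.sqrt_pos.mpr hM0
  have hK0 : (0:ℝ) ≤ (K:ℝ) := Nat.cast_nonneg K
  have hKsq : (K:ℝ) ≤ Real.sqrt M := (Real.le_sqrt hK0 (le_of_lt hM0)).mpr hKM
  have hKx : (K:ℝ) * |x| ≤ Real.sqrt 6 := by
    calc (K:ℝ) * |x| ≤ Real.sqrt M * (Real.sqrt 6 / Real.sqrt M) := by
          apply mul_le_mul hKsq hx (abs_nonneg x) (le_of_lt hsqM0)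
      _ = Real.sqrt 6 := by field_simp
  have h6pi : Real.sqrt 6 < Real.pi := by
    have : Real.sqrt 6 < 2.5 := by
      rw [show (2.5:ℝ) = Real.sqrt (2.5^2) by rw [Real.sqrt_sq]; norm_num]
      exact Real.sqrt_lt_sqrt (by norm_num) (by norm_num)
    linarith [Real.pi_gt_d6]
  have hK2 : (2:ℝ) ≤ (K:ℝ) := by exact_mod_cast hK
  have hx_le : |x| ≤ (K:ℝ) * |x| :=
    le_mul_of_one_le_left (abs_nonneg x) (by linarith)
  have hKxpi : (K:ℝ) * |x| ≤ Real.pi := le_of_lt (lt_of_le_of_lt hKx h6pi)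
  have habs : |(K:ℝ) * x| = (K:ℝ) * |x| := by rw [abs_mul, abs_of_nonneg hK0]
  have hcos1 : Real.cos ((K:ℝ) * |x|) ≤ Real.cos |x| :=
    Real.cos_le_cos_of_nonneg_of_le_pi (abs_nonneg x) hKxpi hx_le
  have key : Real.cos ((K:ℝ) * x) = Real.cos ((K:ℝ) * |x|) := by
    rw [← Real.cos_abs ((K:ℝ) * x), habs]
  constructor
  · rw [key, ← Real.cos_abs x]; exact hcos1
  · intro heq
    rw [key, ← Real.cos_abs x] at heq
    have hinj := Real.strictAntiOn_cos.injOn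
    have h1 : (K:ℝ) * |x| ∈ Set.Icc 0 Real.pi :=
      ⟨mul_nonneg hK0 (abs_nonneg x), hKxpi⟩
    have h2 : |x| ∈ Set.Icc 0 Real.pi := ⟨abs_nonneg x, le_trans hx_le hKxpi⟩
    have := hinj h1 h2 heq
    have : |x| = 0 := by nlinarith [abs_nonneg x]
    exact abs_eq_zero.mp this
end

section
/- Let K ≥ 2 and q ∈ {1,…,K−1}, and fix a real t ≠ 0. Then exp(Re(e^{2πiq/K} log ζ(σ + it))) = o(1/(σ−1)) as σ → 1⁺, where log ζ(s) = ∑_p ∑_k p^{−ks}/k. -/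
open Complex Filter Asymptotics Topology ArithmeticFunction

/-! For `1 < re s` the double series is the logarithm `∑ Λ(n) / log n · n^(-s)` of the Euler
product: a holomorphic function `L` with `exp L = ζ`. Since `ζ(1 + it) ≠ 0` for `t ≠ 0`,
`exp L(σ + it)` tends to a nonzero limit as `σ → 1⁺`, and because `exp` is a covering map the
continuous logarithm `σ ↦ L(σ + it)` converges as well. So the function is bounded near `1`,
hence `o(1 / (σ - 1))`. -/

lemma hasSum_pnat_pow_div {z : ℂ} (hz : ‖z‖ < 1) :
    HasSum (fun k : ℕ+ ↦ z ^ (k : ℕ) / (k : ℕ)) (-log (1 - z)) := by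
  rw [← Equiv.pnatEquivNat.symm.hasSum_iff]
  simpa [Function.comp_def] using hasSum_taylorSeries_neg_log' hz

theorem Complex.exists_tendsto_of_tendsto_exp {f : ℝ → ℂ} {a : ℝ} {z : ℂ}
    (hf : ContinuousOn f (Set.Ioi a)) (hz : z ≠ 0)
    (h : Tendsto (fun x ↦ exp (f x)) (𝓝[>] a) (𝓝 z)) :
    ∃ c, Tendsto f (𝓝[>] a) (𝓝 c) := by
  have hquot : Tendsto (fun x ↦ exp (f x) / z) (𝓝[>] a) (𝓝 1) := by
    simpa [div_self hz] using h.div_const z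
  obtain ⟨b, hab, hslit⟩ := mem_nhdsGT_iff_exists_Ioo_subset.mp
    (hquot.eventually (isOpen_slitPlane.mem_nhds one_mem_slitPlane))
  obtain ⟨x₀, hx₀⟩ := Set.nonempty_Ioo.mpr (Set.mem_Ioi.mp hab)
  set c := f x₀ - log (exp (f x₀) / z)
  -- `x ↦ c + log (exp (f x) / z)` is a second continuous logarithm of `exp ∘ f` near `a`,
  -- agreeing with `f` at `x₀`, so the two coincide by uniqueness of lifts through `exp`.
  have hlift : Set.EqOn f (fun x ↦ c + log (exp (f x) / z)) (Set.Ioo a b) := by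
    have hcont : ContinuousOn f (Set.Ioo a b) := hf.mono Set.Ioo_subset_Ioi_self
    refine isCoveringMap_exp.eqOn_of_comp_eqOn isPreconnected_Ioo hcont
      (continuousOn_const.add ((hcont.cexp.div_const z).clog hslit)) (fun x hx ↦ ?_) hx₀
      (by ring)
    have h0 : exp (f x₀) / z ≠ 0 := slitPlane_ne_zero (hslit hx₀)
    have hx : exp (f x) / z ≠ 0 := slitPlane_ne_zero (hslit hx)
    ext
    simp only [Function.comp_apply, exp_add, exp_log h0, exp_log hx, c, exp_sub]
    field_simp
  refine ⟨c, Tendsto.congr' (eventuallyEq_of_mem (Ioo_mem_nhdsGT hab) hlift).symm ?_⟩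
  simpa using tendsto_const_nhds.add
    ((continuousAt_clog one_mem_slitPlane).tendsto.comp hquot)

lemma isLittleO_one_one_div_sub_nhdsGT (a : ℝ) :
    (fun _ ↦ (1 : ℝ)) =o[𝓝[>] a] fun x ↦ 1 / (x - a) := by
  rw [isLittleO_one_left_iff]
  have hsub : Tendsto (fun x ↦ x - a) (𝓝[>] a) (𝓝[>] 0) := by
    refine tendsto_nhdsWithin_of_tendsto_nhds_of_eventually_within _ ?_ ?_
    · exact ((continuous_sub_right a).tendsto' a 0 (sub_self a)).mono_left nhdsWithin_le_nhds
    · filter_upwards [self_mem_nhdsWithin] with x (hx : a < x) using sub_pos.mpr hx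
  simpa [Function.comp_def] using
    tendsto_norm_atTop_atTop.comp (tendsto_inv_nhdsGT_zero.comp hsub)

noncomputable def logRiemannZeta (s : ℂ) : ℂ :=
  LSeries (fun n ↦ Λ n / Real.log n) s

lemma eulerProduct_log_eq_logRiemannZeta {s : ℂ} (hs : 1 < s.re) :
    ∑' p : Nat.Primes, -log (1 - (p : ℂ) ^ (-s)) = logRiemannZeta s := by
  have h := (1 : DirichletCharacter ℂ 1).eulerProduct_log_eq_LSeries hs
  simp only [MulChar.one_apply (isUnit_of_subsingleton _), one_mul] at h
  exact h

lemma exp_logRiemannZeta {s : ℂ} (hs : 1 < s.re) : exp (logRiemannZeta s) = riemannZeta s := by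
  rw [← eulerProduct_log_eq_logRiemannZeta hs, riemannZeta_eulerProduct_exp_log hs]

lemma differentiableOn_logRiemannZeta :
    DifferentiableOn ℂ logRiemannZeta {s | 1 < s.re} := by
  refine (LSeries_differentiableOn _).mono fun s (hs : 1 < s.re) ↦ ?_
  refine (LSeries.abscissaOfAbsConv_le_of_le_const ⟨1, fun n _ ↦ ?_⟩).trans_lt
    (mod_cast hs)
  have hlog := Real.log_natCast_nonneg n
  rw [← ofReal_div, norm_real, Real.norm_of_nonneg (div_nonneg vonMangoldt_nonneg hlog)]
  exact div_le_one_of_le₀ vonMangoldt_le_log hlog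

lemma tsum_primes_tsum_pnat_eq_logRiemannZeta {s : ℂ} (hs : 1 < s.re) :
    ∑' p : Nat.Primes, ∑' k : ℕ+, (p : ℂ) ^ (-((k : ℕ) : ℂ) * s) / (k : ℕ) =
      logRiemannZeta s := by
  rw [← eulerProduct_log_eq_logRiemannZeta hs]
  refine tsum_congr fun p ↦ ?_
  have hp : ‖(p : ℂ) ^ (-s)‖ < 1 := (norm_prime_cpow_le_one_half p hs).trans_lt (by norm_num)
  simp_rw [neg_mul, ← mul_neg, cpow_nat_mul]
  exact (hasSum_pnat_pow_div hp).tsum_eq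

lemma exists_tendsto_logRiemannZeta_add_I_mul {t : ℝ} (ht : t ≠ 0) :
    ∃ c, Tendsto (fun σ : ℝ ↦ logRiemannZeta (σ + I * t)) (𝓝[>] 1) (𝓝 c) := by
  have hline : Continuous fun σ : ℝ ↦ (σ : ℂ) + I * t := by fun_prop
  refine exists_tendsto_of_tendsto_exp
    (differentiableOn_logRiemannZeta.continuousOn.comp hline.continuousOn
      fun σ (hσ : 1 < σ) ↦ by simpa using hσ)
    (riemannZeta_ne_zero_of_one_le_re (s := 1 + I * t) (by simp)) ?_
  have hζ : ContinuousAt riemannZeta (1 + I * t) :=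
    (differentiableAt_riemannZeta fun h ↦ ht (by simpa using congrArg im h)).continuousAt
  refine Tendsto.congr' ?_ ((hζ.comp_of_eq hline.continuousAt (by simp)).tendsto.mono_left
    nhdsWithin_le_nhds)
  filter_upwards [self_mem_nhdsWithin] with σ (hσ : 1 < σ)
  exact (exp_logRiemannZeta (by simpa using hσ)).symm

theorem exp_re_logzeta_littleO_general (K : ℕ) (q : ℕ)
    (t : ℝ) (ht : t ≠ 0) :
    (fun σ : ℝ => Real.exp
        ((Complex.exp (2 * π * I * q / K) *
          ∑' p : Nat.Primes, ∑' k : ℕ+,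
            (p : ℂ) ^ (-((k : ℕ) : ℂ) * (σ + I * t)) / (k : ℕ)).re))
      =o[nhdsWithin 1 (Set.Ioi 1)] (fun σ : ℝ => 1 / (σ - 1)) := by
  obtain ⟨c, hc⟩ := exists_tendsto_logRiemannZeta_add_I_mul ht
  set ω := Complex.exp (2 * π * I * q / K)
  have hsum : (fun σ : ℝ ↦ Real.exp ((ω * logRiemannZeta (σ + I * t)).re)) =ᶠ[𝓝[>] 1]
      fun σ : ℝ ↦ Real.exp ((ω * ∑' p : Nat.Primes, ∑' k : ℕ+,
        (p : ℂ) ^ (-((k : ℕ) : ℂ) * (σ + I * t)) / (k : ℕ)).re) := by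
    filter_upwards [self_mem_nhdsWithin] with σ (hσ : 1 < σ)
    rw [tsum_primes_tsum_pnat_eq_logRiemannZeta (by simpa using hσ)]
  have hlim := (Real.continuous_exp.tendsto _).comp ((continuous_re.tendsto _).comp
    (hc.const_mul ω))
  exact ((hlim.isBigO_one ℝ).congr' hsum EventuallyEq.rfl).trans_isLittleO
    (isLittleO_one_one_div_sub_nhdsGT 1)

theorem exp_re_logzeta_littleO (K : ℕ) (hK : 2 ≤ K) (q : ℕ) (hq1 : 1 ≤ q) (hqK : q < K)
    (t : ℝ) (ht : t ≠ 0) :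
    (fun σ : ℝ => Real.exp
        ((Complex.exp (2 * π * I * q / K) *
          ∑' p : Nat.Primes, ∑' k : ℕ+,
            (p : ℂ) ^ (-((k : ℕ) : ℂ) * (σ + I * t)) / (k : ℕ)).re))
      =o[nhdsWithin 1 (Set.Ioi 1)] (fun σ : ℝ => 1 / (σ - 1)) :=
  exp_re_logzeta_littleO_general K q t ht
end
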